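/- arXiv:0711.3051 — 2 statements merged into one kernel-verified Lean document; each statement's English description precedes it below -/
import Mathlib

section
/- If f is a transcendental entire function with lower order μ(f) > 0 and finite order λ(f) < ∞, then for every m > 1 with m·μ(f) > λ(f), there is R > 0 such that log M(r^m, f) ≥ m² · log M(r, f) for all r ≥ R, where M(r,f) = max_{|z|=r} |f(z)|. -/
open Filter

/-- The maximum modulus `M(r,f) = max_{|z|=r} |f z|`. -/
noncomputable def maxMod (f : ℂ → ℂ) (r : ℝ) : ℝ :=
  sSup ((fun z => ‖f z‖) '' Metric.sphere (0:ℂ) r)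

/-- The function whose `limsup`/`liminf` at `∞` give the order/lower order of an
entire function: `log log M(r,f) / log r`. -/
noncomputable def entireOrderFun (f : ℂ → ℂ) (r : ℝ) : ℝ :=
  Real.log (Real.log (maxMod f r)) / Real.log r

/-!
By Liouville `M(r) → ∞`. Choose `b` and `a` with `λ(f) < b < m a` and `a < μ(f)`.
For large `r` the order bounds then give
`log M(r) < r^b` and `log M(r^m) > (r^m)^a = r^(m a)`, and `r^(m a - b) ≥ m²` eventually since
`m a - b > 0`; chaining these gives `m² log M(r) ≤ log M(r^m)`.
-/

lemma norm_le_maxMod {f : ℂ → ℂ} (hf : Differentiable ℂ f) {z : ℂ} {r : ℝ}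
    (hr : 0 < r) (hz : ‖z‖ ≤ r) : ‖f z‖ ≤ maxMod f r := by
  have hbdd : BddAbove ((fun z => ‖f z‖) '' Metric.sphere (0:ℂ) r) :=
    ((isCompact_sphere (0:ℂ) r).image (continuous_norm.comp hf.continuous)).bddAbove
  refine Complex.norm_le_of_forall_mem_frontier_norm_le (U := Metric.ball 0 r)
    Metric.isBounded_ball hf.diffContOnCl (fun w hw => ?_) ?_
  · rw [frontier_ball (0:ℂ) hr.ne'] at hw
    exact le_csSup hbdd ⟨w, hw, rfl⟩
  · rw [closure_ball (0:ℂ) hr.ne']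
    simpa using hz

lemma tendsto_maxMod_atTop {f : ℂ → ℂ} (hf : Differentiable ℂ f)
    (hconst : ∀ c : ℂ, f ≠ Function.const ℂ c) : Tendsto (maxMod f) atTop atTop := by
  rw [tendsto_atTop]
  intro C
  obtain ⟨z, hz⟩ : ∃ z, C ≤ ‖f z‖ := by
    by_contra! hlt
    have hb : Bornology.IsBounded (Set.range f) := by
      rw [isBounded_iff_forall_norm_le]
      exact ⟨C, by rintro _ ⟨z, rfl⟩; exact (hlt z).le⟩
    exact hconst (f 0) (funext fun z => hf.apply_eq_apply_of_bounded hb z 0)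
  filter_upwards [eventually_ge_atTop (max ‖z‖ 1)] with r hr
  exact hz.trans (norm_le_maxMod hf (by linarith [le_max_right ‖z‖ 1]) (le_of_max_le_left hr))

lemma isBoundedUnder_ge_entireOrderFun {f : ℂ → ℂ} (hM : Tendsto (maxMod f) atTop atTop) :
    IsBoundedUnder (· ≥ ·) atTop (entireOrderFun f) := by
  refine ⟨0, eventually_map.mpr ?_⟩
  filter_upwards [hM.eventually_ge_atTop (Real.exp 1), eventually_ge_atTop (1 : ℝ)] with r hMr hr
  have hlogM : 1 ≤ Real.log (maxMod f r) :=
    (Real.le_log_iff_exp_le ((Real.exp_pos 1).trans_le hMr)).mpr hMr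
  exact div_nonneg (Real.log_nonneg hlogM) (Real.log_nonneg hr)

section OrderFunction

variable {f : ℂ → ℂ} {r b : ℝ}

lemma entireOrderFun_lt_iff (hr : 1 < r) (hM : 1 < maxMod f r) :
    entireOrderFun f r < b ↔ Real.log (maxMod f r) < r ^ b := by
  rw [entireOrderFun, div_lt_iff₀ (Real.log_pos hr), ← Real.log_rpow (by linarith),
    Real.log_lt_log_iff (Real.log_pos hM) (Real.rpow_pos_of_pos (by linarith) b)]

lemma lt_entireOrderFun_iff (hr : 1 < r) (hM : 1 < maxMod f r) :
    b < entireOrderFun f r ↔ r ^ b < Real.log (maxMod f r) := by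
  rw [entireOrderFun, lt_div_iff₀ (Real.log_pos hr), ← Real.log_rpow (by linarith),
    Real.log_lt_log_iff (Real.rpow_pos_of_pos (by linarith) b) (Real.log_pos hM)]

end OrderFunction

theorem stmt0_general (f : ℂ → ℂ) (hf : Differentiable ℂ f)
    (htrans : ¬ ∃ p : Polynomial ℂ, ∀ z, f z = p.eval z)
    (hfinite : IsBoundedUnder (· ≤ ·) atTop (entireOrderFun f)) :
    ∀ m : ℝ, 1 < m →
      limsup (entireOrderFun f) atTop < m * liminf (entireOrderFun f) atTop →
      ∃ R > 0, ∀ r ≥ R,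
        m ^ 2 * Real.log (maxMod f r) ≤ Real.log (maxMod f (r ^ m)) := by
  intro m hm hlt
  have hM : Tendsto (maxMod f) atTop atTop :=
    tendsto_maxMod_atTop hf fun c hc => htrans ⟨Polynomial.C c, by simp [hc]⟩
  obtain ⟨b, hLb, hbl⟩ := exists_between hlt
  obtain ⟨a, hba, hal⟩ := exists_between ((div_lt_iff₀' (by linarith)).mpr hbl)
  have hgap : 0 < m * a - b := by linarith [(div_lt_iff₀' (by linarith : 0 < m)).mp hba]
  have hpow : Tendsto (fun r : ℝ => r ^ m) atTop atTop := tendsto_rpow_atTop (by linarith)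
  have hlow := eventually_lt_of_lt_liminf hal (isBoundedUnder_ge_entireOrderFun hM)
  have key : ∀ᶠ r in atTop, m ^ 2 * Real.log (maxMod f r) ≤ Real.log (maxMod f (r ^ m)) := by
    filter_upwards [eventually_lt_of_limsup_lt hLb hfinite, hpow.eventually hlow,
      hM.eventually_gt_atTop 1, hpow.eventually (hM.eventually_gt_atTop 1),
      (tendsto_rpow_atTop hgap).eventually_ge_atTop (m ^ 2), eventually_gt_atTop 1]
      with r hub hlb hMr hMrm hrgap hr
    have hr0 : 0 < r := by linarith
    calc m ^ 2 * Real.log (maxMod f r) ≤ r ^ (m * a - b) * r ^ b := by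
          gcongr
          · exact Real.log_nonneg hMr.le
          · exact ((entireOrderFun_lt_iff hr hMr).mp hub).le
      _ = (r ^ m) ^ a := by rw [← Real.rpow_add hr0, ← Real.rpow_mul hr0.le]; ring_nf
      _ ≤ Real.log (maxMod f (r ^ m)) :=
          ((lt_entireOrderFun_iff (Real.one_lt_rpow hr (by linarith)) hMrm).mp hlb).le
  obtain ⟨R, hR⟩ := eventually_atTop.mp key
  exact ⟨max R 1, by positivity, fun r hr => hR r (le_of_max_le_left hr)⟩

theorem stmt0 (f : ℂ → ℂ) (hf : Differentiable ℂ f)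
    (htrans : ¬ ∃ p : Polynomial ℂ, ∀ z, f z = p.eval z)
    (hfinite : IsBoundedUnder (· ≤ ·) atTop (entireOrderFun f))
    (hmu : 0 < liminf (entireOrderFun f) atTop) :
    ∀ m : ℝ, 1 < m →
      limsup (entireOrderFun f) atTop < m * liminf (entireOrderFun f) atTop →
      ∃ R > 0, ∀ r ≥ R,
        m ^ 2 * Real.log (maxMod f r) ≤ Real.log (maxMod f (r ^ m)) :=
  stmt0_general f hf htrans hfinite
end

section
/- (Boutroux–Cartan) Let b_1, …, b_N ∈ ℂ and h > 0. Then the set of z ∈ ℂ with ∏_{n=1}^N |z − b_n| < (h/e)^N can be covered by at most N open disks whose radii have total sum at most 2h. In particular, with h = R/4, for all z outside a union of disks of total diameter at most R one has ∏_{n=1}^N |z − b_n| ≥ (R/(4e))^N. -/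
/-!
Put `A = h / N`. Greedily pick a closed disk of radius `p A` containing `p` of the points with `p`
maximal, remove those points and repeat; the disks with doubled radii have total radius `2 A N = 2 h`.
Outside them, every disk of radius `k A` around `z` contains fewer than `k` of the points: for
`k ≤ p` the removed points are too far, for `k > p` this is the maximality of `p`. Hence the `k`-th
closest point is at distance at least `k A`, so `∏ |z - b_n| ≥ N! A^N ≥ (N A / e)^N`.
-/

open Finset
open scoped Nat

lemma div_exp_one_pow_le_factorial_mul_div_pow {x : ℝ} (hx : 0 ≤ x) (n : ℕ) :
    (x / Real.exp 1) ^ n ≤ n ! * (x / n) ^ n := by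
  rcases n.eq_zero_or_pos with rfl | hn
  · simp
  have hn' : (0 : ℝ) < n := by exact_mod_cast hn
  have key : (n : ℝ) ^ n ≤ Real.exp 1 ^ n * n ! := by
    have := Real.pow_div_factorial_le_exp _ hn'.le n
    rwa [← Real.exp_one_pow, div_le_iff₀ (by positivity)] at this
  rw [div_pow, div_pow, mul_div_assoc', div_le_div_iff₀ (by positivity) (by positivity)]
  calc x ^ n * (n : ℝ) ^ n ≤ x ^ n * (Real.exp 1 ^ n * n !) := by gcongr
    _ = n ! * x ^ n * Real.exp 1 ^ n := by ring

lemma factorial_mul_pow_le_prod {ι : Type*} [DecidableEq ι] {A : ℝ} (hA : 0 ≤ A)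
    (f : ι → ℝ) (s : Finset ι) (hf : ∀ k : ℕ, 0 < k → #{i ∈ s | f i < k * A} < k) :
    (#s)! * A ^ #s ≤ ∏ i ∈ s, f i := by
  induction hs : #s generalizing s with
  | zero => simp_all
  | succ n ih =>
    obtain ⟨i, hi, hfi⟩ : ∃ i ∈ s, ¬ f i < (n + 1 : ℕ) * A := by
      by_contra! hall
      have := hf (n + 1) n.succ_pos
      rw [filter_true_of_mem hall, hs] at this
      exact lt_irrefl _ this
    have hrest : n ! * A ^ n ≤ ∏ j ∈ s.erase i, f j := by
      refine ih _ (fun k hk => lt_of_le_of_lt ?_ (hf k hk)) (by rw [card_erase_of_mem hi, hs]; rfl)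
      exact card_le_card (filter_subset_filter _ (erase_subset _ _))
    rw [← mul_prod_erase s f hi, Nat.factorial_succ, pow_succ]
    push_cast at hfi ⊢
    calc ((n : ℝ) + 1) * n ! * (A ^ n * A) = ((n + 1) * A) * (n ! * A ^ n) := by ring
      _ ≤ f i * ∏ j ∈ s.erase i, f j :=
        mul_le_mul (not_lt.mp hfi) hrest (by positivity) (le_trans (by positivity) (not_lt.mp hfi))

section Covering

variable {ι X : Type*} [PseudoMetricSpace X] (b : ι → X) {A : ℝ}

lemma exists_maximal_closedBall_cluster (hA : 0 ≤ A) (s : Finset ι) (hs : s.Nonempty) :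
    ∃ c₀ : X, ∃ u ⊆ s, u.Nonempty ∧ (∀ i ∈ u, dist c₀ (b i) ≤ #u * A) ∧
      ∀ z : X, ∀ k : ℕ, #u < k → #{i ∈ s | dist z (b i) ≤ k * A} < k := by
  classical
  let P : ℕ → Prop := fun k => ∃ c : X, k ≤ #{i ∈ s | dist c (b i) ≤ k * A}
  set p := Nat.findGreatest P #s
  obtain ⟨i₀, hi₀⟩ := hs
  have hP1 : P 1 := ⟨b i₀, card_pos.mpr ⟨i₀, mem_filter.mpr ⟨hi₀, by simpa using hA⟩⟩⟩
  have hp : 1 ≤ p := Nat.le_findGreatest (card_pos.mpr ⟨i₀, hi₀⟩) hP1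
  obtain ⟨c₀, hc₀⟩ : P p := Nat.findGreatest_spec (P := P) (card_pos.mpr ⟨i₀, hi₀⟩) hP1
  obtain ⟨u, hu, hup⟩ := exists_subset_card_eq hc₀
  refine ⟨c₀, u, hu.trans (filter_subset _ _), card_pos.mp (hup ▸ hp),
    fun i hi => hup ▸ (mem_filter.mp (hu hi)).2, fun z k hk => ?_⟩
  by_contra! hle
  exact (hup ▸ hk).not_ge (Nat.le_findGreatest (hle.trans (card_filter_le _ _)) ⟨z, hle⟩)

theorem exists_balls_forall_card_ball_lt (hA : 0 ≤ A) (s : Finset ι) :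
    ∃ (c : ι → X) (p : ι → ℕ), ∑ i ∈ s, p i ≤ #s ∧
      ∀ z : X, (∀ i ∈ s, z ∉ Metric.ball (c i) (2 * p i * A)) →
        ∀ k : ℕ, 0 < k → #{i ∈ s | dist z (b i) < k * A} < k := by
  classical
  induction s using Finset.strongInduction with
  | H s ih =>
  rcases s.eq_empty_or_nonempty with rfl | hs
  · exact ⟨b, 0, by simp, fun _ _ k hk => by simpa using hk⟩
  obtain ⟨c₀, u, hus, ⟨i₀, hi₀⟩, hu_near, hu_max⟩ := exists_maximal_closedBall_cluster b hA s hs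
  set t := s \ u
  obtain ⟨c', p', hp', hcount'⟩ := ih t (sdiff_ssubset hus ⟨i₀, hi₀⟩)
  have hi₀t : i₀ ∉ t := fun h => (mem_sdiff.mp h).2 hi₀
  -- the new disk is attached to the removed index `i₀`; the other removed indices get radius `0`
  refine ⟨fun i => if i ∈ t then c' i else c₀,
    fun i => if i ∈ t then p' i else if i = i₀ then #u else 0, ?_, fun z hz k hk => ?_⟩
  · have hu_sum : ∑ i ∈ u, (if i ∈ t then p' i else if i = i₀ then #u else 0) = #u := by
      rw [sum_congr rfl fun i hi => if_neg fun ht => (mem_sdiff.mp ht).2 hi, sum_ite_eq' u i₀,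
        if_pos hi₀]
    rw [← sum_sdiff hus, ← card_sdiff_add_card_eq_card hus, hu_sum,
      sum_congr rfl fun i hi => if_pos hi]
    exact Nat.add_le_add_right hp' _
  · have hz₀ : 2 * #u * A ≤ dist z c₀ := by
      simpa [hi₀t] using hz i₀ (hus hi₀)
    rcases le_or_gt k #u with hku | hku
    · refine lt_of_le_of_lt (card_le_card fun i hi => ?_) (hcount' z (fun i hi => ?_) k hk)
      · obtain ⟨his, hiz⟩ := mem_filter.mp hi
        refine mem_filter.mpr ⟨mem_sdiff.mpr ⟨his, fun hiu => ?_⟩, hiz⟩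
        have hkA : (k : ℝ) * A ≤ #u * A := by gcongr
        linarith [hu_near i hiu, dist_triangle_right z c₀ (b i)]
      · simpa [hi] using hz i (sdiff_subset hi)
    · exact lt_of_le_of_lt (card_le_card (monotone_filter_right s fun _ _ => le_of_lt))
        (hu_max z k hku)

end Covering

theorem stmt7 (N : ℕ) (b : Fin N → ℂ) (h : ℝ) (hh : 0 < h) :
    ∃ (c : Fin N → ℂ) (ρ : Fin N → ℝ), (∀ i, 0 ≤ ρ i) ∧ (∑ i, ρ i ≤ 2 * h) ∧
      ∀ z : ℂ, (∏ i, ‖z - b i‖) < (h / Real.exp 1) ^ (N : ℕ) →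
        ∃ i, z ∈ Metric.ball (c i) (ρ i) := by
  set A := h / N
  have hA : 0 ≤ A := by positivity
  obtain ⟨c, p, hp, hcover⟩ := exists_balls_forall_card_ball_lt b hA univ
  refine ⟨c, fun i => 2 * p i * A, fun i => by positivity, ?_, fun z hz => ?_⟩
  · have hNA : N * A ≤ h := by
      rcases N.eq_zero_or_pos with rfl | hN
      · simpa using hh.le
      · exact (mul_div_cancel₀ h (by positivity)).le
    have hp' : (∑ i, p i : ℝ) ≤ N := by exact_mod_cast (card_fin N ▸ hp)
    calc ∑ i, 2 * p i * A = 2 * A * ∑ i, (p i : ℝ) := by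
          rw [mul_sum]; exact sum_congr rfl fun i _ => by ring
      _ ≤ 2 * A * N := by gcongr
      _ ≤ 2 * h := by linarith
  · by_contra! hfar
    have hprod := factorial_mul_pow_le_prod hA (fun i => ‖z - b i‖) univ
      (by simpa [dist_eq_norm] using hcover z fun i _ => hfar i)
    rw [card_fin] at hprod
    linarith [div_exp_one_pow_le_factorial_mul_div_pow hh.le N]
end
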